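/- arXiv:1110.6593 — 2 statements merged into one kernel-verified Lean document; each statement's English description precedes it below -/
import Mathlib

section
/- Let K ⊂ ℝⁿ be a nonempty compact set. Then there exist a Borel probability measure ν on K and constants M_k > 0 with lim_{k→∞} M_k^{1/k} = 1 such that for every k ∈ ℕ and every complex-valued polynomial p in the real coordinates x = (x_1,…,x_n) of total degree at most k, sup_{x ∈ K} |p(x)| ≤ M_k · (∫_K |p|² dν)^{1/2}. -/
open MeasureTheory Filter Topology
open scoped ENNReal

/-- Linearly independent families of functions admit points where the evaluation
matrix has nonzero determinant. -/
theorem exists_det_ne_zero {X : Type*} : ∀ (N : ℕ) (g : Fin N → X → ℂ),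
    LinearIndependent ℂ g → ∃ x : Fin N → X, (Matrix.of fun i j => g i (x j)).det ≠ 0 := by
  intro N
  induction N with
  | zero => intro g _; exact ⟨Fin.elim0, by simp [Matrix.det_fin_zero]⟩
  | succ N ih =>
    intro g hg
    obtain ⟨x, hx⟩ := ih (fun i => g i.castSucc)
      (hg.comp Fin.castSucc (Fin.castSucc_injective N))
    by_contra hcon
    push_neg at hcon
    set c : Fin (N + 1) → ℂ := fun i =>
      (-1 : ℂ) ^ ((i : ℕ) + N) *
        (Matrix.of fun i' j' : Fin N => g (i.succAbove i') (x j')).det with hc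
    have hsum : ∀ y : X, ∑ i, c i * g i y = 0 := by
      intro y
      set z : Fin (N + 1) → X := Fin.snoc x y with hz
      have h0 := hcon z
      rw [Matrix.det_succ_column _ (Fin.last N)] at h0
      rw [← h0]
      refine Finset.sum_congr rfl fun i _ => ?_
      have hsub : ((Matrix.of fun i j => g i (z j)).submatrix i.succAbove
          (Fin.last N).succAbove) = Matrix.of fun i' j' : Fin N => g (i.succAbove i') (x j') := by
        ext i' j'
        simp [hz, Fin.succAbove_last, Fin.snoc_castSucc]
      rw [hsub]
      have hy : z (Fin.last N) = y := by simp [hz]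
      simp only [hc, Matrix.of_apply, hy, Fin.val_last]
      ring
    have hz : ∀ i, c i = 0 := by
      refine Fintype.linearIndependent_iff.mp hg c (funext fun y => ?_)
      simpa using hsum y
    have := hz (Fin.last N)
    simp only [hc, Fin.succAbove_last, Fin.val_last] at this
    rcases mul_eq_zero.mp this with h | h
    · exact pow_ne_zero _ (neg_ne_zero.mpr one_ne_zero) h
    · exact hx h

theorem perK (n : ℕ) (K : Set (Fin n → ℝ)) (hK : IsCompact K) (hne : K.Nonempty) (k : ℕ) :
    ∃ (μ : Measure ↥K) (_ : IsProbabilityMeasure μ),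
      ∀ p : MvPolynomial (Fin n) ℂ, p.totalDegree ≤ k → ∀ x : ↥K,
        ‖MvPolynomial.eval (fun i => (((x : Fin n → ℝ) i : ℝ) : ℂ)) p‖ ≤
          ((k+1:ℝ))^n * Real.sqrt ((∫⁻ y : ↥K, ENNReal.ofReal
            ((‖MvPolynomial.eval (fun i => (((y : Fin n → ℝ) i : ℝ) : ℂ)) p‖)^2)
            ∂μ).toReal) := by
  classical
  haveI : CompactSpace ↥K := isCompact_iff_compactSpace.mp hK
  haveI : Nonempty ↥K := hne.to_subtype
  -- coordinates
  set E : ↥K → Fin n → ℂ := fun x i => (((x : Fin n → ℝ) i : ℝ) : ℂ) with hE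
  -- evaluation linear map
  set ev : MvPolynomial (Fin n) ℂ →ₗ[ℂ] (↥K → ℂ) :=
    { toFun := fun p x => MvPolynomial.eval (E x) p
      map_add' := by intro p q; funext x; simp
      map_smul' := by intro c p; funext x; simp [MvPolynomial.smul_eval] } with hev
  have hev_cont : ∀ p : MvPolynomial (Fin n) ℂ, Continuous (ev p) := by
    intro p
    exact (MvPolynomial.continuous_eval (p := p)).comp
      (continuous_pi fun i => Complex.continuous_ofReal.comp
        ((continuous_apply i).comp continuous_subtype_val))
  set V : Submodule ℂ (↥K → ℂ) := (MvPolynomial.restrictTotalDegree (Fin n) ℂ k).map ev with hV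
  haveI : FiniteDimensional ℂ V := Module.Finite.map _ _
  set N : ℕ := Module.finrank ℂ V with hNdef
  -- N ≥ 1
  have hone : (fun _ : ↥K => (1:ℂ)) ∈ V := by
    refine ⟨1, ?_, ?_⟩
    · show (1:MvPolynomial (Fin n) ℂ) ∈ MvPolynomial.restrictTotalDegree (Fin n) ℂ k
      rw [MvPolynomial.mem_restrictTotalDegree]; simp
    · funext x; simp [hev]
  haveI : Nontrivial V := by
    refine ⟨⟨⟨_, hone⟩, 0, ?_⟩⟩
    intro h
    have := congrFun (congrArg (Subtype.val) h) Classical.ofNonempty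
    simpa using this
  have hN1 : 1 ≤ N := Module.finrank_pos
  -- N ≤ (k+1)^n
  have hcard : N ≤ (k+1)^n := by
    set m : (Fin n → Fin (k+1)) → (↥K → ℂ) :=
      fun d x => ∏ i, (E x i) ^ (d i : ℕ) with hm
    have hsub : V ≤ Submodule.span ℂ (Set.range m) := by
      rintro v ⟨p, hp, rfl⟩
      rw [SetLike.mem_coe, MvPolynomial.mem_restrictTotalDegree] at hp
      have : ev p = ∑ d ∈ p.support, MvPolynomial.coeff d p •
          m (fun i => ⟨min (d i) k, by omega⟩) := by
        funext x
        simp only [hev, LinearMap.coe_mk, AddHom.coe_mk, MvPolynomial.eval_eq']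
        rw [Finset.sum_apply]
        refine Finset.sum_congr rfl fun d hd => ?_
        have hdk : ∀ i, d i ≤ k := by
          intro i
          refine le_trans ?_ (le_trans (MvPolynomial.le_totalDegree hd) hp)
          by_cases h : d i = 0
          · simp [h]
          · exact Finset.single_le_sum (f := fun a => d a) (fun _ _ => Nat.zero_le _)
              (Finsupp.mem_support_iff.mpr h)
        simp only [Pi.smul_apply, smul_eq_mul, hm]
        congr 1
        refine Finset.prod_congr rfl fun i _ => ?_
        congr 1
        exact (Nat.min_eq_left (hdk i)).symm
      rw [this]
      exact Submodule.sum_mem _ fun d _ => Submodule.smul_mem _ _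
        (Submodule.subset_span ⟨_, rfl⟩)
    calc N ≤ Module.finrank ℂ (Submodule.span ℂ (Set.range m)) := by
          haveI : FiniteDimensional ℂ (Submodule.span ℂ (Set.range m)) :=
            FiniteDimensional.span_of_finite ℂ (Set.finite_range m)
          exact Submodule.finrank_mono hsub
      _ ≤ Fintype.card (Fin n → Fin (k+1)) := finrank_range_le_card m
      _ = (k+1)^n := by simp
  -- basis of V, as functions
  set b : Module.Basis (Fin N) ℂ V := Module.finBasis ℂ V with hb
  set g : Fin N → ↥K → ℂ := fun i => (b i : ↥K → ℂ) with hg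
  have li : LinearIndependent ℂ g :=
    b.linearIndependent.map' V.subtype V.ker_subtype
  have hgcont : ∀ i, Continuous (g i) := by
    intro i
    obtain ⟨p, -, hp⟩ := (b i).2
    have : g i = ev p := by rw [hg]; exact hp.symm
    rw [this]
    exact hev_cont p
  -- Fekete points
  set F : (Fin N → ↥K) → ℝ := fun z => ‖(Matrix.of fun i j => g i (z j)).det‖
    with hF
  have hFc : Continuous F :=
    continuous_norm.comp (Continuous.matrix_det
      (continuous_pi fun i => continuous_pi fun j => (hgcont i).comp (continuous_apply j)))
  obtain ⟨z, -, hmax⟩ := isCompact_univ.exists_isMaxOn Set.univ_nonempty hFc.continuousOn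
  have hmax' : ∀ w, F w ≤ F z := fun w => hmax (Set.mem_univ w)
  set A : Matrix (Fin N) (Fin N) ℂ := Matrix.of fun i j => g i (z j) with hA
  have hdet : A.det ≠ 0 := by
    obtain ⟨z0, hz0⟩ := exists_det_ne_zero N g li
    have habs : (0:ℝ) < ‖A.det‖ :=
      lt_of_lt_of_le (norm_pos_iff.mpr hz0) (hmax' z0)
    intro h
    rw [h] at habs
    simp at habs
  have habs : (0:ℝ) < ‖A.det‖ := norm_pos_iff.mpr hdet
  have hNne : (N:ℝ≥0∞) ≠ 0 := Nat.cast_ne_zero.mpr (Nat.one_le_iff_ne_zero.mp hN1)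
  -- the sampling measure
  set μ : Measure ↥K := ((N:ℝ≥0∞))⁻¹ • (∑ j : Fin N, Measure.dirac (z j)) with hμ
  haveI hprob : IsProbabilityMeasure μ := by
    constructor
    rw [hμ]
    simp only [Measure.smul_apply, Measure.coe_finset_sum, Finset.sum_apply,
      measure_univ, Finset.sum_const, Finset.card_univ, Fintype.card_fin, nsmul_eq_mul,
      mul_one, smul_eq_mul]
    exact ENNReal.inv_mul_cancel hNne (ENNReal.natCast_ne_top N)
  refine ⟨μ, hprob, ?_⟩
  intro p hdeg x
  -- integrand
  set f : ↥K → ℝ≥0∞ := fun y =>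
    ENNReal.ofReal ((‖MvPolynomial.eval (E y) p‖)^2) with hf
  have hfc : Continuous f := by
    apply ENNReal.continuous_ofReal.comp
    exact ((continuous_norm.comp (hev_cont p)).pow 2)
  have hint : (∫⁻ y, f y ∂μ) = (N:ℝ≥0∞)⁻¹ * ∑ j, f (z j) := by
    rw [hμ, lintegral_smul_measure, lintegral_finset_sum_measure]
    congr 1
    exact Finset.sum_congr rfl fun j _ => lintegral_dirac' _ hfc.measurable
  set I : ℝ := (∫⁻ y, f y ∂μ).toReal with hI
  have hIsum : ∑ j, (‖MvPolynomial.eval (E (z j)) p‖)^2 = N * I := by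
    rw [hI, hint, ENNReal.toReal_mul]
    rw [ENNReal.toReal_sum (fun j _ => ENNReal.ofReal_ne_top)]
    have : ∀ j, (f (z j)).toReal = (‖MvPolynomial.eval (E (z j)) p‖)^2 :=
      fun j => ENNReal.toReal_ofReal (by positivity)
    rw [Finset.sum_congr rfl fun j _ => this j]
    rw [← mul_assoc]
    have : (N:ℝ) * ((N:ℝ≥0∞)⁻¹).toReal = 1 := by
      rw [ENNReal.toReal_inv]
      simp only [ENNReal.toReal_natCast]
      field_simp
    rw [this, one_mul]
  -- representation in the basis
  have hmem : ev p ∈ V :=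
    Submodule.mem_map_of_mem (by rw [MvPolynomial.mem_restrictTotalDegree]; exact hdeg)
  set c : Fin N → ℂ := fun i => (b.repr ⟨ev p, hmem⟩) i with hcdef
  have hrepr : ∀ y, MvPolynomial.eval (E y) p = ∑ i, c i * g i y := by
    intro y
    have hsum := b.sum_repr ⟨ev p, hmem⟩
    have h0 : ((∑ i, (b.repr ⟨ev p, hmem⟩) i • b i : V) : ↥K → ℂ) y
        = ((⟨ev p, hmem⟩ : V) : ↥K → ℂ) y := by rw [hsum]
    simp only [AddSubmonoidClass.coe_finset_sum, SetLike.val_smul, Finset.sum_apply,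
      Pi.smul_apply, smul_eq_mul] at h0
    exact h0.symm
  -- the Lagrange-type identity
  have hkey : ∀ x' : ↥K, A.det * (MvPolynomial.eval (E x') p) =
      ∑ j, (MvPolynomial.eval (E (z j)) p) * (Matrix.cramer A (fun i => g i x')) j := by
    intro x'
    have hRHS : ∀ j, (MvPolynomial.eval (E (z j)) p) * (Matrix.cramer A (fun i => g i x')) j
        = ∑ i, c i * (A i j * (Matrix.cramer A (fun i => g i x')) j) := by
      intro j
      rw [hrepr (z j), Finset.sum_mul]
      refine Finset.sum_congr rfl fun i _ => ?_
      rw [mul_assoc]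
      rfl
    rw [Finset.sum_congr rfl fun j _ => hRHS j, Finset.sum_comm]
    have hmv : ∀ i, ∑ j, A i j * (Matrix.cramer A (fun i => g i x')) j
        = A.det * g i x' := by
      intro i
      have : (Matrix.mulVec A (Matrix.cramer A (fun i => g i x'))) i = A.det * g i x' := by
        rw [Matrix.mulVec_cramer]
        simp
      rw [← this]
      rfl
    calc A.det * (MvPolynomial.eval (E x') p) = ∑ i, c i * (A.det * g i x') := by
          rw [hrepr x', Finset.mul_sum]
          exact Finset.sum_congr rfl fun i _ => by ring
      _ = ∑ i, ∑ j, c i * (A i j * (Matrix.cramer A (fun i => g i x')) j) := by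
          refine Finset.sum_congr rfl fun i _ => ?_
          rw [← Finset.mul_sum, hmv i]
  -- cramer bound via maximality
  have hcram : ∀ (x' : ↥K) j,
      ‖(Matrix.cramer A (fun i => g i x')) j‖ ≤ ‖A.det‖ := by
    intro x' j
    rw [Matrix.cramer_apply]
    have hupd : Matrix.updateCol A j (fun i => g i x')
        = Matrix.of fun i j' => g i (Function.update z j x' j') := by
      ext i j'
      rw [Matrix.updateCol_apply]
      by_cases h : j' = j <;> simp [h, Function.update_apply, hA]
    rw [hupd]
    exact hmax' (Function.update z j x')
  -- main estimate
  have h1 : ‖A.det‖ * ‖MvPolynomial.eval (E x) p‖ ≤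
      (∑ j, ‖MvPolynomial.eval (E (z j)) p‖) * ‖A.det‖ := by
    rw [← norm_mul, hkey x]
    calc ‖∑ j, (MvPolynomial.eval (E (z j)) p) *
            (Matrix.cramer A (fun i => g i x)) j‖
        ≤ ∑ j, ‖(MvPolynomial.eval (E (z j)) p) *
            (Matrix.cramer A (fun i => g i x)) j‖ := norm_sum_le _ _
      _ = ∑ j, ‖MvPolynomial.eval (E (z j)) p‖ *
            ‖(Matrix.cramer A (fun i => g i x)) j‖ := by simp [map_mul]
      _ ≤ ∑ j, ‖MvPolynomial.eval (E (z j)) p‖ * ‖A.det‖ :=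
          Finset.sum_le_sum fun j _ =>
            mul_le_mul_of_nonneg_left (hcram x j) (norm_nonneg _)
      _ = (∑ j, ‖MvPolynomial.eval (E (z j)) p‖) * ‖A.det‖ :=
          (Finset.sum_mul _ _ _).symm
  have h2 : ‖MvPolynomial.eval (E x) p‖ ≤
      ∑ j, ‖MvPolynomial.eval (E (z j)) p‖ := by
    have h1' : ‖MvPolynomial.eval (E x) p‖ * ‖A.det‖ ≤
        (∑ j, ‖MvPolynomial.eval (E (z j)) p‖) * ‖A.det‖ := by
      rw [mul_comm]; exact h1
    exact le_of_mul_le_mul_right h1' habs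
  have h3 : (∑ j, ‖MvPolynomial.eval (E (z j)) p‖) ≤ (N:ℝ) * Real.sqrt I := by
    have hcs : (∑ j, ‖MvPolynomial.eval (E (z j)) p‖)^2 ≤
        (N:ℝ) * ∑ j, (‖MvPolynomial.eval (E (z j)) p‖)^2 := by
      simpa using sq_sum_le_card_mul_sum_sq (s := (Finset.univ : Finset (Fin N)))
        (f := fun j => ‖MvPolynomial.eval (E (z j)) p‖)
    have hnn : (0:ℝ) ≤ ∑ j, ‖MvPolynomial.eval (E (z j)) p‖ :=
      Finset.sum_nonneg fun j _ => norm_nonneg _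
    calc (∑ j, ‖MvPolynomial.eval (E (z j)) p‖)
        = Real.sqrt ((∑ j, ‖MvPolynomial.eval (E (z j)) p‖)^2) :=
          (Real.sqrt_sq hnn).symm
      _ ≤ Real.sqrt ((N:ℝ) * ((N:ℝ) * I)) := by
          apply Real.sqrt_le_sqrt
          rw [hIsum] at hcs
          exact hcs
      _ = (N:ℝ) * Real.sqrt I := by
          rw [← mul_assoc, Real.sqrt_mul (by positivity) I, Real.sqrt_mul_self (by positivity)]
  have hfin : ‖MvPolynomial.eval (E x) p‖ ≤ ((k+1:ℝ))^n * Real.sqrt I :=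
    le_trans (le_trans h2 h3) (mul_le_mul_of_nonneg_right
      (by exact_mod_cast hcard) (Real.sqrt_nonneg _))
  exact hfin

/-- Proposition 3.4: every compact set `K ⊂ ℝⁿ` admits a Borel probability measure `ν` such
that for every complex-valued polynomial `p` of degree at most `k` in the real coordinates,
`‖p‖_K ≤ M_k ‖p‖_{L²(ν)}` with `lim_k M_k^{1/k} = 1`. -/
theorem stmt8 (n : ℕ) (K : Set (Fin n → ℝ)) (hK : IsCompact K) (hne : K.Nonempty) :
    ∃ (ν : Measure ↥K) (_ : IsProbabilityMeasure ν) (M : ℕ → ℝ),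
      (∀ k, 0 < M k) ∧
      Filter.Tendsto (fun k : ℕ => (M k) ^ ((1 : ℝ) / (k : ℝ))) atTop (𝓝 1) ∧
      ∀ (k : ℕ) (p : MvPolynomial (Fin n) ℂ), p.totalDegree ≤ k → ∀ x : ↥K,
        ‖MvPolynomial.eval (fun i => (((x : Fin n → ℝ) i : ℝ) : ℂ)) p‖ ≤
          M k * (∫ y : ↥K,
              (‖MvPolynomial.eval (fun i => (((y : Fin n → ℝ) i : ℝ) : ℂ)) p‖) ^ 2
            ∂ν) ^ ((1 : ℝ) / 2) := by
  classical
  haveI : CompactSpace ↥K := isCompact_iff_compactSpace.mp hK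
  haveI : Nonempty ↥K := hne.to_subtype
  choose μ hprob hbound using perK n K hK hne
  -- weights
  set w : ℕ → ℝ≥0∞ := fun k => ENNReal.ofReal (((k:ℝ)+1)^2)⁻¹ with hw
  have hsummable : Summable (fun k : ℕ => (((k:ℝ)+1)^2)⁻¹) := by
    have h2 : Summable (fun m : ℕ => ((m:ℝ)^2)⁻¹) := by
      simpa [one_div] using Real.summable_one_div_nat_pow.mpr one_lt_two
    have := (summable_nat_add_iff 1).mpr h2
    refine this.congr fun k => ?_
    push_cast
    ring_nf
  set T : ℝ≥0∞ := ∑' k, w k with hT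
  have hTeq : T = ENNReal.ofReal (∑' k : ℕ, (((k:ℝ)+1)^2)⁻¹) := by
    rw [hT]
    simp only [hw]
    exact (ENNReal.ofReal_tsum_of_nonneg (fun k => by positivity) hsummable).symm
  have hTtop : T ≠ ⊤ := by rw [hTeq]; exact ENNReal.ofReal_ne_top
  have hT0 : T ≠ 0 := by
    intro h
    have h1 : w 0 ≤ T := ENNReal.le_tsum 0
    rw [h] at h1
    simp only [hw, nonpos_iff_eq_zero] at h1
    rw [ENNReal.ofReal_eq_zero] at h1
    norm_num at h1
  set ν : Measure ↥K := T⁻¹ • Measure.sum (fun k => w k • μ k) with hν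
  haveI hprobν : IsProbabilityMeasure ν := by
    constructor
    rw [hν]
    simp only [Measure.smul_apply, smul_eq_mul]
    rw [Measure.sum_apply _ MeasurableSet.univ]
    have : ∀ k, (w k • μ k) Set.univ = w k := by
      intro k
      haveI := hprob k
      simp [Measure.smul_apply]
    rw [tsum_congr this, ← hT]
    exact ENNReal.inv_mul_cancel hT0 hTtop
  set T' : ℝ := T.toReal with hT'
  have hT'pos : 0 < T' := ENNReal.toReal_pos hT0 hTtop
  set M : ℕ → ℝ := fun k => Real.sqrt T' * (((k:ℝ)+1))^(n+1) with hM
  have hMpos : ∀ k, 0 < M k := by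
    intro k
    have : 0 < Real.sqrt T' := Real.sqrt_pos.mpr hT'pos
    positivity
  refine ⟨ν, hprobν, M, hMpos, ?_, ?_⟩
  · -- the limit
    have hexp : ∀ k : ℕ, (M k) ^ ((1:ℝ)/(k:ℝ)) =
        Real.exp ((Real.log (Real.sqrt T') + ((n:ℝ)+1) * Real.log ((k:ℝ)+1)) * (1/(k:ℝ))) := by
      intro k
      rw [Real.rpow_def_of_pos (hMpos k), hM]
      congr 2
      rw [Real.log_mul (ne_of_gt (Real.sqrt_pos.mpr hT'pos)) (by positivity), Real.log_pow]
      push_cast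
      ring
    simp only [hexp]
    have h0 : Tendsto (fun k : ℕ =>
        (Real.log (Real.sqrt T') + ((n:ℝ)+1) * Real.log ((k:ℝ)+1)) * (1/(k:ℝ)))
        atTop (𝓝 0) := by
      have hlog : Tendsto (fun k : ℕ => Real.log ((k:ℝ)+1) / ((k:ℝ)+1)) atTop (𝓝 0) := by
        have := Real.isLittleO_log_id_atTop.tendsto_div_nhds_zero
        exact this.comp (tendsto_atTop_add_const_right atTop 1 tendsto_natCast_atTop_atTop)
      have hrat : Tendsto (fun k : ℕ => ((k:ℝ)+1) / (k:ℝ)) atTop (𝓝 1) := by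
        have : (fun k : ℕ => ((k:ℝ)+1) / (k:ℝ)) =ᶠ[atTop] (fun k : ℕ => 1 + 1/(k:ℝ)) := by
          filter_upwards [eventually_ge_atTop 1] with k hk
          have : (k:ℝ) ≠ 0 := by positivity
          field_simp
        rw [tendsto_congr' this]
        simpa using (tendsto_const_nhds : Tendsto (fun _ : ℕ => (1:ℝ)) atTop (𝓝 1)).add
          (tendsto_one_div_atTop_nhds_zero_nat)
      have hlogk : Tendsto (fun k : ℕ => Real.log ((k:ℝ)+1) * (1/(k:ℝ))) atTop (𝓝 0) := by
        have : (fun k : ℕ => Real.log ((k:ℝ)+1) * (1/(k:ℝ))) =ᶠ[atTop]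
            (fun k : ℕ => (Real.log ((k:ℝ)+1) / ((k:ℝ)+1)) * (((k:ℝ)+1)/(k:ℝ))) := by
          filter_upwards [eventually_ge_atTop 1] with k hk
          have h1 : (k:ℝ) ≠ 0 := by positivity
          have h2 : (k:ℝ)+1 ≠ 0 := by positivity
          field_simp
        rw [tendsto_congr' this]
        simpa using hlog.mul hrat
      have hconst : Tendsto (fun k : ℕ => Real.log (Real.sqrt T') * (1/(k:ℝ)))
          atTop (𝓝 0) := by
        simpa using (tendsto_const_nhds : Tendsto (fun _ : ℕ => Real.log (Real.sqrt T')) atTop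
          (𝓝 (Real.log (Real.sqrt T')))).mul (tendsto_one_div_atTop_nhds_zero_nat)
      have h2 : Tendsto (fun k : ℕ => ((n:ℝ)+1) * (Real.log ((k:ℝ)+1) * (1/(k:ℝ))))
          atTop (𝓝 0) := by simpa using hlogk.const_mul (((n:ℝ)+1))
      have hsum := hconst.add h2
      simp only [add_zero] at hsum
      refine hsum.congr fun k => ?_
      ring
    have := (Real.continuous_exp.tendsto 0).comp h0
    simpa [Function.comp_def] using this
  · -- the bound
    intro k p hdeg x
    set f : ↥K → ℝ≥0∞ := fun y =>
      ENNReal.ofReal ((‖MvPolynomial.eval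
        (fun i => (((y : Fin n → ℝ) i : ℝ) : ℂ)) p‖)^2) with hf
    have hcont : Continuous fun y : ↥K =>
        (‖MvPolynomial.eval (fun i => (((y : Fin n → ℝ) i : ℝ) : ℂ)) p‖)^2 := by
      apply Continuous.pow
      apply continuous_norm.comp
      exact (MvPolynomial.continuous_eval (p := p)).comp
        (continuous_pi fun i => Complex.continuous_ofReal.comp
          ((continuous_apply i).comp continuous_subtype_val))
    have hfc : Continuous f := ENNReal.continuous_ofReal.comp hcont
    -- finiteness of the ν-integral
    obtain ⟨y0, -, hy0⟩ := isCompact_univ.exists_isMaxOn Set.univ_nonempty hcont.continuousOn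
    have hνfin : (∫⁻ y, f y ∂ν) ≠ ⊤ := by
      have hle : (∫⁻ y, f y ∂ν) ≤ ∫⁻ _, ENNReal.ofReal ((‖MvPolynomial.eval
          (fun i => (((y0 : Fin n → ℝ) i : ℝ) : ℂ)) p‖)^2) ∂ν := by
        refine lintegral_mono fun y => ?_
        exact ENNReal.ofReal_le_ofReal (hy0 (Set.mem_univ y))
      rw [lintegral_const] at hle
      simp only [measure_univ, mul_one] at hle
      exact ne_top_of_le_ne_top ENNReal.ofReal_ne_top hle
    -- comparison with the k-th component
    have hcomp : (w k) * (∫⁻ y, f y ∂μ k) ≤ T * (∫⁻ y, f y ∂ν) := by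
      rw [hν, lintegral_smul_measure, smul_eq_mul, ← mul_assoc, ENNReal.mul_inv_cancel hT0 hTtop, one_mul,
        lintegral_sum_measure]
      have : (w k) * (∫⁻ y, f y ∂μ k) = ∫⁻ y, f y ∂(w k • μ k) := by
        rw [lintegral_smul_measure, smul_eq_mul]
      rw [this]
      exact ENNReal.le_tsum k
    have hμfin : (∫⁻ y, f y ∂μ k) ≠ ⊤ := by
      haveI := hprob k
      have hle : (∫⁻ y, f y ∂μ k) ≤ ∫⁻ _, ENNReal.ofReal ((‖MvPolynomial.eval
          (fun i => (((y0 : Fin n → ℝ) i : ℝ) : ℂ)) p‖)^2) ∂μ k := by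
        refine lintegral_mono fun y => ?_
        exact ENNReal.ofReal_le_ofReal (hy0 (Set.mem_univ y))
      rw [lintegral_const] at hle
      simp only [measure_univ, mul_one] at hle
      exact ne_top_of_le_ne_top ENNReal.ofReal_ne_top hle
    -- real-valued comparison
    set J : ℝ := (∫⁻ y, f y ∂ν).toReal with hJ
    have hJnn : 0 ≤ J := ENNReal.toReal_nonneg
    have hIk : (∫⁻ y, f y ∂μ k).toReal ≤ (((k:ℝ)+1)^2) * T' * J := by
      have hwk0 : w k ≠ 0 := by
        rw [hw]
        simp only [ne_eq, ENNReal.ofReal_eq_zero, not_le]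
        positivity
      have hwktop : w k ≠ ⊤ := by rw [hw]; exact ENNReal.ofReal_ne_top
      have h1 : (∫⁻ y, f y ∂μ k) ≤ (w k)⁻¹ * (T * (∫⁻ y, f y ∂ν)) := by
        calc (∫⁻ y, f y ∂μ k) = (w k)⁻¹ * (w k * (∫⁻ y, f y ∂μ k)) := by
              rw [← mul_assoc, ENNReal.inv_mul_cancel hwk0 hwktop, one_mul]
          _ ≤ (w k)⁻¹ * (T * (∫⁻ y, f y ∂ν)) := mul_le_mul_right hcomp _
      have hwkinv : ((w k)⁻¹).toReal = ((k:ℝ)+1)^2 := by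
        rw [ENNReal.toReal_inv, hw, ENNReal.toReal_ofReal (by positivity)]
        rw [inv_inv]
      have hrhs_ne : (w k)⁻¹ * (T * (∫⁻ y, f y ∂ν)) ≠ ⊤ := by
        apply ENNReal.mul_ne_top
        · rw [ENNReal.inv_ne_top]; exact hwk0
        · exact ENNReal.mul_ne_top hTtop hνfin
      calc (∫⁻ y, f y ∂μ k).toReal ≤ ((w k)⁻¹ * (T * (∫⁻ y, f y ∂ν))).toReal :=
            ENNReal.toReal_mono hrhs_ne h1
        _ = (((k:ℝ)+1)^2) * T' * J := by
            rw [ENNReal.toReal_mul, ENNReal.toReal_mul, hwkinv, hT', hJ, mul_assoc]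
    -- put everything together
    have hfinal := hbound k p hdeg x
    have hsqrt : Real.sqrt ((∫⁻ y, f y ∂μ k).toReal) ≤
        (((k:ℝ)+1)) * (Real.sqrt T' * Real.sqrt J) := by
      calc Real.sqrt ((∫⁻ y, f y ∂μ k).toReal) ≤
            Real.sqrt ((((k:ℝ)+1)^2) * T' * J) := Real.sqrt_le_sqrt hIk
        _ = (((k:ℝ)+1)) * (Real.sqrt T' * Real.sqrt J) := by
            rw [mul_assoc, Real.sqrt_mul (by positivity), Real.sqrt_mul (le_of_lt hT'pos),
              Real.sqrt_sq (by positivity)]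
    have hB : (∫ y : ↥K, (‖MvPolynomial.eval
        (fun i => (((y : Fin n → ℝ) i : ℝ) : ℂ)) p‖)^2 ∂ν) = J := by
      rw [hJ]
      rw [integral_eq_lintegral_of_nonneg_ae (ae_of_all _ fun y => by positivity)
        hcont.aestronglyMeasurable]
    rw [hB, ← Real.sqrt_eq_rpow]
    calc ‖MvPolynomial.eval (fun i => (((x : Fin n → ℝ) i : ℝ) : ℂ)) p‖
        ≤ (((k:ℝ)+1))^n * Real.sqrt ((∫⁻ y, f y ∂μ k).toReal) := hfinal
      _ ≤ (((k:ℝ)+1))^n * ((((k:ℝ)+1)) * (Real.sqrt T' * Real.sqrt J)) :=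
          mul_le_mul_of_nonneg_left hsqrt (by positivity)
      _ = M k * Real.sqrt J := by rw [hM]; ring
end

section
/- Let K ⊂ ℂⁿ be a compact set, ν ∈ ℳ(K), and Q : K → ℝ continuous. Then for every μ ∈ ℳ(K): W̄(μ) = W̄^Q(μ)·e^{∫_K Q dμ}, W̲(μ) = W̲^Q(μ)·e^{∫_K Q dμ}, J̄(μ) = J̄^Q(μ)·e^{∫_K Q dμ}, and J̲(μ) = J̲^Q(μ)·e^{∫_K Q dμ}. -/
open MeasureTheory Filter Topology ENNReal

noncomputable section

/-- Index set for the standard monomial basis of the space `𝒫_k` of holomorphic polynomials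
of degree at most `k` in `n` complex variables: exponent multi-indices of total degree `≤ k`. -/
abbrev MIdx (n k : ℕ) : Type := {f : Fin n → Fin (k + 1) // ∑ i, (f i : ℕ) ≤ k}

instance instNonemptyMIdx (n k : ℕ) : Nonempty (MIdx n k) :=
  ⟨⟨fun _ => 0, by simp⟩⟩

/-- `N_k`, the dimension of `𝒫_k` (equal to `(n+k).choose k`). -/
abbrev NN (n k : ℕ) : ℕ := Fintype.card (MIdx n k)

/-- The Vandermonde determinant `VDM_k(x) = det [e_i(x_j)]` in the monomial basis. -/
def vdm (n k : ℕ) {K : Set (Fin n → ℂ)} (x : MIdx n k → ↥K) : ℂ :=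
  Matrix.det (Matrix.of fun α β : MIdx n k =>
    ∏ i, ((x β : Fin n → ℂ) i) ^ ((α.1 i : ℕ)))

/-- `|VDM_k^Q(x)| = |VDM_k(x)| e^{-kQ(x_1)} ⋯ e^{-kQ(x_{N_k})}`. -/
def absVdmW (n k : ℕ) {K : Set (Fin n → ℂ)} (Q : ↥K → ℝ) (x : MIdx n k → ↥K) : ℝ :=
  ‖vdm n k x‖ * ∏ β, Real.exp (-(k : ℝ) * Q (x β))

/-- `sup_{x ∈ K^{N_k}} |VDM_k^Q(x)|`. -/
def supVdmW (n k : ℕ) (K : Set (Fin n → ℂ)) (Q : ↥K → ℝ) : ℝ :=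
  ⨆ x : MIdx n k → ↥K, absVdmW n k Q x

/-- The (normalized) weighted transfinite diameter `δ̄^Q(K)`. -/
def tdiamW (n : ℕ) (K : Set (Fin n → ℂ)) (Q : ↥K → ℝ) : ℝ :=
  Filter.limsup (fun k : ℕ => (supVdmW n k K Q) ^ ((1 : ℝ) / ((k * NN n k : ℕ) : ℝ))) atTop

/-- The (normalized) transfinite diameter `δ̄(K) = δ̄^0(K)`. -/
def tdiam (n : ℕ) (K : Set (Fin n → ℂ)) : ℝ := tdiamW n K fun _ => 0

/-- `log : [0,∞) → [-∞,∞)` with `log 0 = -∞`. -/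
def elog (x : ℝ) : EReal := if x ≤ 0 then ⊥ else ((Real.log x : ℝ) : EReal)

/-- The empirical measure `(1/N_k) ∑ δ_{x_j}` of a tuple of points of `K`. -/
def emp {n k : ℕ} {K : Set (Fin n → ℂ)} (x : MIdx n k → ↥K) : Measure ↥K :=
  (NN n k : ℝ≥0∞)⁻¹ • ∑ β : MIdx n k, Measure.dirac (x β)

lemma emp_isProb {n k : ℕ} {K : Set (Fin n → ℂ)} (x : MIdx n k → ↥K) :
    IsProbabilityMeasure (emp x) := by
  constructor
  have h0 : (NN n k : ℝ≥0∞) ≠ 0 := Nat.cast_ne_zero.mpr Fintype.card_ne_zero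
  simp only [emp, Measure.smul_apply, Measure.finset_sum_apply,
    Measure.dirac_apply_of_mem (Set.mem_univ _), Finset.sum_const, Finset.card_univ,
    nsmul_eq_mul, mul_one, smul_eq_mul]
  exact ENNReal.inv_mul_cancel h0 (by simp)

/-- The empirical measure as an element of `ℳ(K)`. -/
def empP {n k : ℕ} {K : Set (Fin n → ℂ)} (x : MIdx n k → ↥K) : ProbabilityMeasure ↥K :=
  ⟨emp x, emp_isProb x⟩

/-- `W_k^Q(G)`. -/
def Wk (n k : ℕ) {K : Set (Fin n → ℂ)} (Q : ↥K → ℝ) (G : Set (ProbabilityMeasure ↥K)) : ℝ :=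
  sSup ((fun x : MIdx n k → ↥K => (absVdmW n k Q x) ^ ((1 : ℝ) / ((k * NN n k : ℕ) : ℝ))) ''
    {x | empP x ∈ G})

/-- `W̄^Q(μ)`. -/
def WbarQ (n : ℕ) {K : Set (Fin n → ℂ)} (Q : ↥K → ℝ) (μ : ProbabilityMeasure ↥K) : ℝ :=
  ⨅ G : {G : Set (ProbabilityMeasure ↥K) // IsOpen G ∧ μ ∈ G},
    Filter.limsup (fun k : ℕ => Wk n k Q G.1) atTop

/-- `W̲^Q(μ)`. -/
def WlowQ (n : ℕ) {K : Set (Fin n → ℂ)} (Q : ↥K → ℝ) (μ : ProbabilityMeasure ↥K) : ℝ :=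
  ⨅ G : {G : Set (ProbabilityMeasure ↥K) // IsOpen G ∧ μ ∈ G},
    Filter.liminf (fun k : ℕ => Wk n k Q G.1) atTop

/-- `W̄(μ)`. -/
def Wbar (n : ℕ) {K : Set (Fin n → ℂ)} (μ : ProbabilityMeasure ↥K) : ℝ :=
  WbarQ n (fun _ => 0) μ

/-- `W̲(μ)`. -/
def Wlow (n : ℕ) {K : Set (Fin n → ℂ)} (μ : ProbabilityMeasure ↥K) : ℝ :=
  WlowQ n (fun _ => 0) μ

/-- `J_k^Q(G)`, defined with respect to the measure `ν` on `K`. -/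
def Jk (n k : ℕ) {K : Set (Fin n → ℂ)} (ν : Measure ↥K) (Q : ↥K → ℝ)
    (G : Set (ProbabilityMeasure ↥K)) : ℝ :=
  (∫ x in {x : MIdx n k → ↥K | empP x ∈ G}, (absVdmW n k Q x) ^ 2
      ∂(Measure.pi fun _ : MIdx n k => ν)) ^ ((1 : ℝ) / ((2 * k * NN n k : ℕ) : ℝ))

/-- `J̄^Q(μ)`. -/
def JbarQ (n : ℕ) {K : Set (Fin n → ℂ)} (ν : Measure ↥K) (Q : ↥K → ℝ)
    (μ : ProbabilityMeasure ↥K) : ℝ :=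
  ⨅ G : {G : Set (ProbabilityMeasure ↥K) // IsOpen G ∧ μ ∈ G},
    Filter.limsup (fun k : ℕ => Jk n k ν Q G.1) atTop

/-- `J̲^Q(μ)`. -/
def JlowQ (n : ℕ) {K : Set (Fin n → ℂ)} (ν : Measure ↥K) (Q : ↥K → ℝ)
    (μ : ProbabilityMeasure ↥K) : ℝ :=
  ⨅ G : {G : Set (ProbabilityMeasure ↥K) // IsOpen G ∧ μ ∈ G},
    Filter.liminf (fun k : ℕ => Jk n k ν Q G.1) atTop

/-- `J̄(μ)`. -/
def Jbar (n : ℕ) {K : Set (Fin n → ℂ)} (ν : Measure ↥K) (μ : ProbabilityMeasure ↥K) : ℝ :=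
  JbarQ n ν (fun _ => 0) μ

/-- `J̲(μ)`. -/
def Jlow (n : ℕ) {K : Set (Fin n → ℂ)} (ν : Measure ↥K) (μ : ProbabilityMeasure ↥K) : ℝ :=
  JlowQ n ν (fun _ => 0) μ

/-- The weighted Bernstein–Markov property for the triple `(K, ν, Q)`. -/
def WBM (n : ℕ) {K : Set (Fin n → ℂ)} (ν : Measure ↥K) (Q : ↥K → ℝ) : Prop :=
  ∃ M : ℕ → ℝ, (∀ k, 0 < M k) ∧
    Filter.limsup (fun k : ℕ => (M k) ^ ((1 : ℝ) / (k : ℝ))) atTop = 1 ∧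
    ∀ (k : ℕ) (p : MvPolynomial (Fin n) ℂ), p.totalDegree ≤ k → ∀ z : ↥K,
      Real.exp (-(k : ℝ) * Q z) * ‖MvPolynomial.eval (z : Fin n → ℂ) p‖ ≤
        M k * (∫ w : ↥K,
            (Real.exp (-(k : ℝ) * Q w) * ‖MvPolynomial.eval (w : Fin n → ℂ) p‖) ^ 2
          ∂ν) ^ ((1 : ℝ) / 2)

/-- `ν` is a strong Bernstein–Markov measure for `K`. -/
def StrongBM (n : ℕ) {K : Set (Fin n → ℂ)} (ν : Measure ↥K) : Prop :=
  ∀ Q : ↥K → ℝ, Continuous Q → WBM n ν Q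

/-- `Z_k = Z_k(K, Q, ν)`. -/
def Zk (n k : ℕ) {K : Set (Fin n → ℂ)} (ν : Measure ↥K) (Q : ↥K → ℝ) : ℝ :=
  ∫ x : MIdx n k → ↥K, (absVdmW n k Q x) ^ 2 ∂(Measure.pi fun _ : MIdx n k => ν)

/-- `Prob_k`, the probability measure on `K^{N_k}` with density `|VDM_k^Q|²/Z_k` w.r.t. `ν^{⊗N_k}`. -/
def Probk (n k : ℕ) {K : Set (Fin n → ℂ)} (ν : Measure ↥K) (Q : ↥K → ℝ) :
    Measure (MIdx n k → ↥K) :=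
  (Measure.pi fun _ : MIdx n k => ν).withDensity
    (fun x => ENNReal.ofReal ((absVdmW n k Q x) ^ 2 / Zk n k ν Q))

/-- `σ_k = (j_k)_* Prob_k` as a set function: `σ_k(Γ) = Prob_k(j_k^{-1}(Γ))`. -/
def sigk (n k : ℕ) {K : Set (Fin n → ℂ)} (ν : Measure ↥K) (Q : ↥K → ℝ)
    (Γ : Set (ProbabilityMeasure ↥K)) : ℝ≥0∞ :=
  Probk n k ν Q {x | empP x ∈ Γ}


/-! ### Auxiliary lemmas for `stmt12` -/

namespace Stmt12Aux

open MeasureTheory Filter Topology Set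

variable {n : ℕ} {K : Set (Fin n → ℂ)}

lemma NN_pos (n k : ℕ) : 0 < NN n k := Fintype.card_pos

lemma absVdmW_nonneg (k : ℕ) (Q : ↥K → ℝ) (x : MIdx n k → ↥K) : 0 ≤ absVdmW n k Q x :=
  mul_nonneg (norm_nonneg _) (Finset.prod_nonneg fun _ _ => (Real.exp_pos _).le)

lemma absVdmW_zero (k : ℕ) (x : MIdx n k → ↥K) :
    absVdmW n k (fun _ => (0 : ℝ)) x = ‖vdm n k x‖ := by
  simp [absVdmW]

lemma absVdmW_eq (k : ℕ) (Q : ↥K → ℝ) (x : MIdx n k → ↥K) :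
    absVdmW n k Q x
      = absVdmW n k (fun _ => (0 : ℝ)) x * Real.exp (-(k : ℝ) * ∑ β, Q (x β)) := by
  rw [absVdmW_zero, absVdmW, Finset.mul_sum, Real.exp_sum]

lemma absVdmW_zero_eq (k : ℕ) (Q : ↥K → ℝ) (x : MIdx n k → ↥K) :
    absVdmW n k (fun _ => (0 : ℝ)) x
      = absVdmW n k Q x * Real.exp ((k : ℝ) * ∑ β, Q (x β)) := by
  rw [absVdmW_eq k Q x, mul_assoc, ← Real.exp_add]
  simp

lemma continuous_vdm (k : ℕ) : Continuous fun x : MIdx n k → ↥K => vdm n k x := by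
  unfold vdm
  apply Continuous.matrix_det
  apply continuous_matrix
  intro α β
  simp only [Matrix.of_apply]
  exact continuous_finset_prod _ fun i _ =>
    ((continuous_apply i).comp (continuous_subtype_val.comp (continuous_apply β))).pow _

lemma continuous_absVdmW (k : ℕ) {Q : ↥K → ℝ} (hQ : Continuous Q) :
    Continuous (absVdmW n k Q) := by
  unfold absVdmW
  exact (continuous_norm.comp (continuous_vdm k)).mul
    (continuous_finset_prod _ fun β _ =>
      Real.continuous_exp.comp (continuous_const.mul (hQ.comp (continuous_apply β))))

lemma integrable_dirac_cont {f : ↥K → ℝ} (hf : Continuous f) (a : ↥K) :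
    Integrable f (Measure.dirac a) := by
  refine ⟨hf.aestronglyMeasurable, ?_⟩
  simp only [HasFiniteIntegral]
  rw [lintegral_dirac]
  exact ENNReal.coe_lt_top

lemma integral_emp {k : ℕ} (x : MIdx n k → ↥K) {f : ↥K → ℝ} (hf : Continuous f) :
    ∫ z, f z ∂(emp x) = (NN n k : ℝ)⁻¹ * ∑ β, f (x β) := by
  rw [emp, integral_smul_measure,
    integral_finset_sum_measure (fun β _ => integrable_dirac_cont hf (x β))]
  simp [integral_dirac, smul_eq_mul]

lemma continuous_empP (k : ℕ) : Continuous fun x : MIdx n k → ↥K => empP x := by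
  rw [continuous_iff_continuousAt]
  intro x
  unfold ContinuousAt
  rw [ProbabilityMeasure.tendsto_iff_forall_integral_tendsto]
  intro f
  have hrw : ∀ y : MIdx n k → ↥K,
      ∫ ω, f ω ∂((empP y : Measure ↥K)) = (NN n k : ℝ)⁻¹ * ∑ β, f (y β) :=
    fun y => integral_emp y f.continuous
  simp only [hrw]
  exact ((continuous_const.mul (continuous_finset_sum _ fun β _ =>
    f.continuous.comp (continuous_apply β))).tendsto x)

lemma measurableSet_emp_mem {k : ℕ} {G : Set (ProbabilityMeasure ↥K)} (hG : IsOpen G) :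
    MeasurableSet {x : MIdx n k → ↥K | empP x ∈ G} :=
  (hG.preimage (continuous_empP k)).measurableSet

/-! ### Bounds -/

lemma vdm_le {R : ℝ} (hR : 1 ≤ R)
    (hKR : ∀ z : ↥K, ∀ i, ‖(z : Fin n → ℂ) i‖ ≤ R) (k : ℕ)
    (x : MIdx n k → ↥K) :
    ‖vdm n k x‖ ≤ (Nat.factorial (NN n k) : ℝ) * R ^ (k * NN n k) := by
  have hR0 : (0 : ℝ) ≤ R := zero_le_one.trans hR
  have entry : ∀ α β : MIdx n k,
      ‖(Matrix.of fun α β : MIdx n k =>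
        ∏ i, ((x β : Fin n → ℂ) i) ^ ((α.1 i : ℕ))) α β‖ ≤ R ^ k := by
    intro α β
    rw [Matrix.of_apply, norm_prod]
    calc ∏ i, ‖((x β : Fin n → ℂ) i) ^ ((α.1 i : ℕ))‖
        ≤ ∏ i, R ^ ((α.1 i : ℕ)) := by
          refine Finset.prod_le_prod (fun i _ => norm_nonneg _) (fun i _ => ?_)
          rw [norm_pow]
          exact pow_le_pow_left₀ (norm_nonneg _) (hKR _ _) _
      _ = R ^ (∑ i, (α.1 i : ℕ)) := Finset.prod_pow_eq_pow_sum _ _ _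
      _ ≤ R ^ k := pow_le_pow_right₀ hR α.2
  have h := Matrix.det_le (abv := NormedField.toAbsoluteValue ℂ) entry
  rw [vdm]
  calc ‖Matrix.det _‖
      ≤ Nat.factorial (Fintype.card (MIdx n k)) • (R ^ k) ^ (Fintype.card (MIdx n k)) := h
    _ = (Nat.factorial (NN n k) : ℝ) * R ^ (k * NN n k) := by
        rw [nsmul_eq_mul, ← pow_mul]

lemma absVdmW_le_pow {Q : ↥K → ℝ} {R M : ℝ} (hR : 1 ≤ R)
    (hKR : ∀ z : ↥K, ∀ i, ‖(z : Fin n → ℂ) i‖ ≤ R)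
    (hM : 0 ≤ M) (hQM : ∀ z, |Q z| ≤ M) {k : ℕ} (hk : 1 ≤ k) (x : MIdx n k → ↥K) :
    absVdmW n k Q x ≤ ((2 : ℝ) ^ n * R * Real.exp M) ^ (k * NN n k) := by
  have hR0 : (0 : ℝ) ≤ R := zero_le_one.trans hR
  have h1 : ‖vdm n k x‖ ≤ (Nat.factorial (NN n k) : ℝ) * R ^ (k * NN n k) :=
    vdm_le hR hKR k x
  have h2 : ∏ β : MIdx n k, Real.exp (-(k : ℝ) * Q (x β))
      ≤ Real.exp M ^ (k * NN n k) := by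
    have hfac : ∀ β : MIdx n k, Real.exp (-(k : ℝ) * Q (x β)) ≤ Real.exp M ^ k := by
      intro β
      rw [← Real.exp_nat_mul]
      apply Real.exp_le_exp.mpr
      have hq := (abs_le.mp (hQM (x β))).1
      have hk0 : (0 : ℝ) ≤ (k : ℝ) := Nat.cast_nonneg k
      nlinarith
    calc ∏ β : MIdx n k, Real.exp (-(k : ℝ) * Q (x β))
        ≤ ∏ _β : MIdx n k, Real.exp M ^ k :=
          Finset.prod_le_prod (fun _ _ => (Real.exp_pos _).le) (fun β _ => hfac β)
      _ = Real.exp M ^ (k * NN n k) := by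
          rw [Finset.prod_const, Finset.card_univ, ← pow_mul]
  have h3 : (Nat.factorial (NN n k) : ℝ) ≤ ((2 : ℝ) ^ n) ^ (k * NN n k) := by
    have hNle : NN n k ≤ (k + 1) ^ n := by
      have h := Fintype.card_subtype_le (fun f : Fin n → Fin (k + 1) => ∑ i, (f i : ℕ) ≤ k)
      simpa using h
    have h2k : k + 1 ≤ 2 ^ k := Nat.lt_two_pow_self
    have hnat : Nat.factorial (NN n k) ≤ (2 ^ n) ^ (k * NN n k) := by
      calc Nat.factorial (NN n k) ≤ NN n k ^ NN n k := Nat.factorial_le_pow _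
        _ ≤ ((k + 1) ^ n) ^ NN n k := Nat.pow_le_pow_left hNle _
        _ ≤ ((2 ^ k) ^ n) ^ NN n k := Nat.pow_le_pow_left (Nat.pow_le_pow_left h2k n) _
        _ = (2 ^ n) ^ (k * NN n k) := by
            rw [← pow_mul, ← pow_mul, ← pow_mul]
            congr 1
            ring
    exact_mod_cast hnat
  have hprodnn : (0 : ℝ) ≤ ∏ β : MIdx n k, Real.exp (-(k : ℝ) * Q (x β)) :=
    Finset.prod_nonneg fun _ _ => (Real.exp_pos _).le
  have hexp0 : (0 : ℝ) ≤ Real.exp M ^ (k * NN n k) := pow_nonneg (Real.exp_pos M).le _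
  have hRp : (0 : ℝ) ≤ R ^ (k * NN n k) := pow_nonneg hR0 _
  calc absVdmW n k Q x
      = ‖vdm n k x‖ * ∏ β : MIdx n k, Real.exp (-(k : ℝ) * Q (x β)) := rfl
    _ ≤ ((Nat.factorial (NN n k) : ℝ) * R ^ (k * NN n k)) * (Real.exp M ^ (k * NN n k)) := by
        apply mul_le_mul h1 h2 hprodnn
        positivity
    _ ≤ (((2 : ℝ) ^ n) ^ (k * NN n k) * R ^ (k * NN n k)) * (Real.exp M ^ (k * NN n k)) := by
        apply mul_le_mul_of_nonneg_right _ hexp0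
        exact mul_le_mul_of_nonneg_right h3 hRp
    _ = ((2 : ℝ) ^ n * R * Real.exp M) ^ (k * NN n k) := by
        rw [mul_pow, mul_pow]

/-! ### rpow helpers -/

lemma rpow_aux {b : ℝ} (hb : 0 ≤ b) {m : ℕ} (hm : m ≠ 0) :
    (b ^ m) ^ ((1 : ℝ) / (m : ℝ)) = b := by
  rw [one_div]
  exact Real.pow_rpow_inv_natCast hb hm

lemma kN_ne_zero {k : ℕ} (hk : 1 ≤ k) : k * NN n k ≠ 0 :=
  Nat.mul_ne_zero (Nat.one_le_iff_ne_zero.mp hk) (NN_pos n k).ne'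

lemma kN2_ne_zero {k : ℕ} (hk : 1 ≤ k) : 2 * k * NN n k ≠ 0 :=
  Nat.mul_ne_zero (Nat.mul_ne_zero two_ne_zero (Nat.one_le_iff_ne_zero.mp hk)) (NN_pos n k).ne'

/-! ### `Wk` lemmas -/

lemma elem_le {Q : ↥K → ℝ} {B : ℝ} (hB : 0 ≤ B) {k : ℕ} (hk : 1 ≤ k)
    (habs : ∀ x : MIdx n k → ↥K, absVdmW n k Q x ≤ B ^ (k * NN n k))
    (x : MIdx n k → ↥K) :
    (absVdmW n k Q x) ^ ((1 : ℝ) / ((k * NN n k : ℕ) : ℝ)) ≤ B := by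
  calc (absVdmW n k Q x) ^ ((1 : ℝ) / ((k * NN n k : ℕ) : ℝ))
      ≤ (B ^ (k * NN n k)) ^ ((1 : ℝ) / ((k * NN n k : ℕ) : ℝ)) :=
        Real.rpow_le_rpow (absVdmW_nonneg _ _ _) (habs x) (by positivity)
    _ = B := rpow_aux hB (kN_ne_zero hk)

lemma Wk_bddAbove {Q : ↥K → ℝ} {B : ℝ} (hB : 0 ≤ B) {k : ℕ} (hk : 1 ≤ k)
    (habs : ∀ x : MIdx n k → ↥K, absVdmW n k Q x ≤ B ^ (k * NN n k))
    (G : Set (ProbabilityMeasure ↥K)) :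
    BddAbove ((fun x : MIdx n k → ↥K =>
      (absVdmW n k Q x) ^ ((1 : ℝ) / ((k * NN n k : ℕ) : ℝ))) '' {x | empP x ∈ G}) := by
  refine ⟨B, ?_⟩
  rintro y ⟨x, -, rfl⟩
  exact elem_le hB hk habs x

lemma Wk_nonneg (k : ℕ) (Q : ↥K → ℝ) (G : Set (ProbabilityMeasure ↥K)) :
    0 ≤ Wk n k Q G := by
  apply Real.sSup_nonneg
  rintro y ⟨x, -, rfl⟩
  exact Real.rpow_nonneg (absVdmW_nonneg _ _ _) _

lemma Wk_le {Q : ↥K → ℝ} {B : ℝ} (hB : 0 ≤ B) {k : ℕ} (hk : 1 ≤ k)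
    (habs : ∀ x : MIdx n k → ↥K, absVdmW n k Q x ≤ B ^ (k * NN n k))
    (G : Set (ProbabilityMeasure ↥K)) : Wk n k Q G ≤ B := by
  apply Real.sSup_le _ hB
  rintro y ⟨x, -, rfl⟩
  exact elem_le hB hk habs x

lemma Wk_mono {Q : ↥K → ℝ} {B : ℝ} (hB : 0 ≤ B) {k : ℕ} (hk : 1 ≤ k)
    (habs : ∀ x : MIdx n k → ↥K, absVdmW n k Q x ≤ B ^ (k * NN n k))
    {G G' : Set (ProbabilityMeasure ↥K)} (hGG : G ⊆ G') :
    Wk n k Q G ≤ Wk n k Q G' := by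
  apply Real.sSup_le _ (Wk_nonneg k Q G')
  rintro y ⟨x, hx, rfl⟩
  exact le_csSup (Wk_bddAbove hB hk habs G') ⟨x, hGG hx, rfl⟩

lemma fQ_eq {Q : ↥K → ℝ} {k : ℕ} (hk : 1 ≤ k) (x : MIdx n k → ↥K) :
    (absVdmW n k Q x) ^ ((1 : ℝ) / ((k * NN n k : ℕ) : ℝ))
      = (absVdmW n k (fun _ => (0 : ℝ)) x) ^ ((1 : ℝ) / ((k * NN n k : ℕ) : ℝ))
        * Real.exp (-((NN n k : ℝ)⁻¹ * ∑ β, Q (x β))) := by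
  have hkR : ((k : ℝ)) ≠ 0 := Nat.cast_ne_zero.mpr (Nat.one_le_iff_ne_zero.mp hk)
  have hNR : ((NN n k : ℝ)) ≠ 0 := Nat.cast_ne_zero.mpr (NN_pos n k).ne'
  rw [absVdmW_eq k Q x,
    Real.mul_rpow (absVdmW_nonneg _ _ _) (Real.exp_pos _).le, ← Real.exp_mul]
  congr 1
  push_cast
  field_simp

lemma Wk_compare {Q : ↥K → ℝ} {B : ℝ} (hB : 0 ≤ B) {k : ℕ} (hk : 1 ≤ k)
    (habsQ : ∀ x : MIdx n k → ↥K, absVdmW n k Q x ≤ B ^ (k * NN n k))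
    (habs0 : ∀ x : MIdx n k → ↥K, absVdmW n k (fun _ => (0 : ℝ)) x ≤ B ^ (k * NN n k))
    {G : Set (ProbabilityMeasure ↥K)} {c ε : ℝ}
    (hG : ∀ x : MIdx n k → ↥K, empP x ∈ G →
      |(NN n k : ℝ)⁻¹ * ∑ β, Q (x β) - c| ≤ ε) :
    Wk n k Q G ≤ Wk n k (fun _ => (0 : ℝ)) G * Real.exp (ε - c) ∧
    Wk n k (fun _ => (0 : ℝ)) G ≤ Wk n k Q G * Real.exp (c + ε) := by
  constructor
  · apply Real.sSup_le _ (mul_nonneg (Wk_nonneg k _ G) (Real.exp_pos _).le)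
    rintro y ⟨x, hx, rfl⟩
    dsimp only
    obtain ⟨ha, hb⟩ := abs_le.mp (hG x hx)
    rw [fQ_eq (Q := Q) hk x]
    have h1 : (absVdmW n k (fun _ => (0 : ℝ)) x) ^ ((1 : ℝ) / ((k * NN n k : ℕ) : ℝ))
        ≤ Wk n k (fun _ => (0 : ℝ)) G :=
      le_csSup (Wk_bddAbove hB hk habs0 G) ⟨x, hx, rfl⟩
    have h2 : Real.exp (-((NN n k : ℝ)⁻¹ * ∑ β, Q (x β))) ≤ Real.exp (ε - c) :=
      Real.exp_le_exp.mpr (by linarith)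
    exact mul_le_mul h1 h2 (Real.exp_pos _).le (Wk_nonneg k _ G)
  · apply Real.sSup_le _ (mul_nonneg (Wk_nonneg k _ G) (Real.exp_pos _).le)
    rintro y ⟨x, hx, rfl⟩
    dsimp only
    obtain ⟨ha, hb⟩ := abs_le.mp (hG x hx)
    have h0 : (absVdmW n k (fun _ => (0 : ℝ)) x) ^ ((1 : ℝ) / ((k * NN n k : ℕ) : ℝ))
        = (absVdmW n k Q x) ^ ((1 : ℝ) / ((k * NN n k : ℕ) : ℝ))
          * Real.exp ((NN n k : ℝ)⁻¹ * ∑ β, Q (x β)) := by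
      rw [fQ_eq (Q := Q) hk x, mul_assoc, ← Real.exp_add]
      simp
    rw [h0]
    have h1 : (absVdmW n k Q x) ^ ((1 : ℝ) / ((k * NN n k : ℕ) : ℝ)) ≤ Wk n k Q G :=
      le_csSup (Wk_bddAbove hB hk habsQ G) ⟨x, hx, rfl⟩
    have h2 : Real.exp ((NN n k : ℝ)⁻¹ * ∑ β, Q (x β)) ≤ Real.exp (c + ε) :=
      Real.exp_le_exp.mpr (by linarith)
    exact mul_le_mul h1 h2 (Real.exp_pos _).le (Wk_nonneg k Q G)


/-! ### `Jk` lemmas -/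

section JkSection

variable [CompactSpace ↥K] {ν : Measure ↥K} [IsProbabilityMeasure ν]

lemma sq_integrable (k : ℕ) {Q : ↥K → ℝ} (hQ : Continuous Q) (ν : Measure ↥K)
    [IsProbabilityMeasure ν] :
    Integrable (fun x : MIdx n k → ↥K => (absVdmW n k Q x) ^ 2)
      (Measure.pi fun _ : MIdx n k => ν) :=
  ((continuous_absVdmW k hQ).pow 2).integrable_of_hasCompactSupport
    ((isClosed_tsupport _).isCompact)

lemma Jk_nonneg (k : ℕ) (ν : Measure ↥K) (Q : ↥K → ℝ) (G : Set (ProbabilityMeasure ↥K)) :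
    0 ≤ Jk n k ν Q G := by
  unfold Jk
  exact Real.rpow_nonneg (integral_nonneg fun x => sq_nonneg _) _

lemma Jk_le {Q : ↥K → ℝ} (hQ : Continuous Q) {B : ℝ} (hB : 0 ≤ B) {k : ℕ} (hk : 1 ≤ k)
    (habs : ∀ x : MIdx n k → ↥K, absVdmW n k Q x ≤ B ^ (k * NN n k))
    (G : Set (ProbabilityMeasure ↥K)) : Jk n k ν Q G ≤ B := by
  have hBp : (B ^ (k * NN n k)) ^ 2 = B ^ (2 * k * NN n k) := by
    rw [← pow_mul]; congr 1; ring
  have hint : ∫ x in {x : MIdx n k → ↥K | empP x ∈ G}, (absVdmW n k Q x) ^ 2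
      ∂(Measure.pi fun _ : MIdx n k => ν) ≤ B ^ (2 * k * NN n k) := by
    calc ∫ x in {x : MIdx n k → ↥K | empP x ∈ G}, (absVdmW n k Q x) ^ 2
          ∂(Measure.pi fun _ : MIdx n k => ν)
        ≤ ∫ _x in {x : MIdx n k → ↥K | empP x ∈ G}, (B ^ (k * NN n k)) ^ 2
          ∂(Measure.pi fun _ : MIdx n k => ν) :=
          integral_mono ((sq_integrable k hQ ν).restrict) (integrable_const _)
            (fun x => pow_le_pow_left₀ (absVdmW_nonneg _ _ _) (habs x) 2)
      _ = ((Measure.pi fun _ : MIdx n k => ν) {x : MIdx n k → ↥K | empP x ∈ G}).toReal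
            * (B ^ (k * NN n k)) ^ 2 := by rw [setIntegral_const, smul_eq_mul]; rfl
      _ ≤ 1 * (B ^ (k * NN n k)) ^ 2 := by
          apply mul_le_mul_of_nonneg_right _ (by positivity)
          calc ((Measure.pi fun _ : MIdx n k => ν) {x : MIdx n k → ↥K | empP x ∈ G}).toReal
              ≤ (1 : ℝ≥0∞).toReal := ENNReal.toReal_mono ENNReal.one_ne_top prob_le_one
            _ = 1 := ENNReal.toReal_one
      _ = B ^ (2 * k * NN n k) := by rw [one_mul, hBp]
  unfold Jk
  calc (∫ x in {x : MIdx n k → ↥K | empP x ∈ G}, (absVdmW n k Q x) ^ 2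
        ∂(Measure.pi fun _ : MIdx n k => ν)) ^ ((1 : ℝ) / ((2 * k * NN n k : ℕ) : ℝ))
      ≤ (B ^ (2 * k * NN n k)) ^ ((1 : ℝ) / ((2 * k * NN n k : ℕ) : ℝ)) :=
        Real.rpow_le_rpow (integral_nonneg fun x => sq_nonneg _) hint (by positivity)
    _ = B := rpow_aux hB (kN2_ne_zero hk)

lemma Jk_mono (k : ℕ) {Q : ↥K → ℝ} (hQ : Continuous Q)
    {G G' : Set (ProbabilityMeasure ↥K)} (h : G ⊆ G') :
    Jk n k ν Q G ≤ Jk n k ν Q G' := by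
  unfold Jk
  apply Real.rpow_le_rpow (integral_nonneg fun x => sq_nonneg _) _ (by positivity)
  exact setIntegral_mono_set (sq_integrable k hQ ν).integrableOn
    (Filter.Eventually.of_forall fun x => sq_nonneg _)
    (HasSubset.Subset.eventuallyLE fun x hx => h hx)

lemma Jk_compare {Q : ↥K → ℝ} (hQ : Continuous Q) {k : ℕ} (hk : 1 ≤ k)
    {G : Set (ProbabilityMeasure ↥K)} (hGo : IsOpen G) {c ε : ℝ}
    (hG : ∀ x : MIdx n k → ↥K, empP x ∈ G →
      |(NN n k : ℝ)⁻¹ * ∑ β, Q (x β) - c| ≤ ε) :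
    Jk n k ν Q G ≤ Jk n k ν (fun _ => (0 : ℝ)) G * Real.exp (ε - c) ∧
    Jk n k ν (fun _ => (0 : ℝ)) G ≤ Jk n k ν Q G * Real.exp (c + ε) := by
  have hSm : MeasurableSet {x : MIdx n k → ↥K | empP x ∈ G} := measurableSet_emp_mem hGo
  have hN0 : (0 : ℝ) < (NN n k : ℝ) := by exact_mod_cast NN_pos n k
  have hk0 : (0 : ℝ) < (k : ℝ) := by exact_mod_cast hk
  constructor
  · have hpt : ∀ x ∈ {x : MIdx n k → ↥K | empP x ∈ G}, (absVdmW n k Q x) ^ 2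
        ≤ (absVdmW n k (fun _ => (0 : ℝ)) x) ^ 2 * Real.exp (ε - c) ^ (2 * k * NN n k) := by
      intro x hx
      obtain ⟨ha, hb⟩ := abs_le.mp (hG x hx)
      rw [absVdmW_eq k Q x, mul_pow]
      apply mul_le_mul_of_nonneg_left _ (sq_nonneg _)
      rw [← Real.exp_nat_mul, ← Real.exp_nat_mul]
      apply Real.exp_le_exp.mpr
      have hSum : (c - ε) * (NN n k : ℝ) ≤ ∑ β, Q (x β) := by
        have h2 : ((NN n k : ℝ)⁻¹ * ∑ β, Q (x β)) * (NN n k : ℝ) = ∑ β, Q (x β) := by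
          field_simp
        nlinarith [mul_le_mul_of_nonneg_right ha hN0.le]
      push_cast
      nlinarith [mul_le_mul_of_nonneg_left hSum (by positivity : (0 : ℝ) ≤ 2 * (k : ℝ))]
    have hle : ∫ x in {x : MIdx n k → ↥K | empP x ∈ G}, (absVdmW n k Q x) ^ 2
          ∂(Measure.pi fun _ : MIdx n k => ν)
        ≤ (∫ x in {x : MIdx n k → ↥K | empP x ∈ G}, (absVdmW n k (fun _ => (0 : ℝ)) x) ^ 2
            ∂(Measure.pi fun _ : MIdx n k => ν))
          * Real.exp (ε - c) ^ (2 * k * NN n k) := by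
      rw [← integral_mul_const]
      exact setIntegral_mono_on (sq_integrable k hQ ν).integrableOn
        (((sq_integrable k continuous_const ν).integrableOn).mul_const _) hSm hpt
    unfold Jk
    calc (∫ x in {x : MIdx n k → ↥K | empP x ∈ G}, (absVdmW n k Q x) ^ 2
            ∂(Measure.pi fun _ : MIdx n k => ν)) ^ ((1 : ℝ) / ((2 * k * NN n k : ℕ) : ℝ))
        ≤ ((∫ x in {x : MIdx n k → ↥K | empP x ∈ G}, (absVdmW n k (fun _ => (0 : ℝ)) x) ^ 2
            ∂(Measure.pi fun _ : MIdx n k => ν))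
            * Real.exp (ε - c) ^ (2 * k * NN n k)) ^ ((1 : ℝ) / ((2 * k * NN n k : ℕ) : ℝ)) :=
          Real.rpow_le_rpow (integral_nonneg fun x => sq_nonneg _) hle (by positivity)
      _ = _ := by
          rw [Real.mul_rpow (integral_nonneg fun x => sq_nonneg _) (by positivity),
            rpow_aux (Real.exp_pos _).le (kN2_ne_zero hk)]
  · have hpt : ∀ x ∈ {x : MIdx n k → ↥K | empP x ∈ G}, (absVdmW n k (fun _ => (0 : ℝ)) x) ^ 2
        ≤ (absVdmW n k Q x) ^ 2 * Real.exp (c + ε) ^ (2 * k * NN n k) := by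
      intro x hx
      obtain ⟨ha, hb⟩ := abs_le.mp (hG x hx)
      rw [absVdmW_zero_eq k Q x, mul_pow]
      apply mul_le_mul_of_nonneg_left _ (sq_nonneg _)
      rw [← Real.exp_nat_mul, ← Real.exp_nat_mul]
      apply Real.exp_le_exp.mpr
      have hSum : ∑ β, Q (x β) ≤ (c + ε) * (NN n k : ℝ) := by
        have h2 : ((NN n k : ℝ)⁻¹ * ∑ β, Q (x β)) * (NN n k : ℝ) = ∑ β, Q (x β) := by
          field_simp
        nlinarith [mul_le_mul_of_nonneg_right hb hN0.le]
      push_cast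
      nlinarith [mul_le_mul_of_nonneg_left hSum (by positivity : (0 : ℝ) ≤ 2 * (k : ℝ))]
    have hle : ∫ x in {x : MIdx n k → ↥K | empP x ∈ G}, (absVdmW n k (fun _ => (0 : ℝ)) x) ^ 2
          ∂(Measure.pi fun _ : MIdx n k => ν)
        ≤ (∫ x in {x : MIdx n k → ↥K | empP x ∈ G}, (absVdmW n k Q x) ^ 2
            ∂(Measure.pi fun _ : MIdx n k => ν))
          * Real.exp (c + ε) ^ (2 * k * NN n k) := by
      rw [← integral_mul_const]
      exact setIntegral_mono_on (sq_integrable k continuous_const ν).integrableOn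
        (((sq_integrable k hQ ν).integrableOn).mul_const _) hSm hpt
    unfold Jk
    calc (∫ x in {x : MIdx n k → ↥K | empP x ∈ G}, (absVdmW n k (fun _ => (0 : ℝ)) x) ^ 2
            ∂(Measure.pi fun _ : MIdx n k => ν)) ^ ((1 : ℝ) / ((2 * k * NN n k : ℕ) : ℝ))
        ≤ ((∫ x in {x : MIdx n k → ↥K | empP x ∈ G}, (absVdmW n k Q x) ^ 2
            ∂(Measure.pi fun _ : MIdx n k => ν))
            * Real.exp (c + ε) ^ (2 * k * NN n k)) ^ ((1 : ℝ) / ((2 * k * NN n k : ℕ) : ℝ)) :=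
          Real.rpow_le_rpow (integral_nonneg fun x => sq_nonneg _) hle (by positivity)
      _ = _ := by
          rw [Real.mul_rpow (integral_nonneg fun x => sq_nonneg _) (by positivity),
            rpow_aux (Real.exp_pos _).le (kN2_ne_zero hk)]

end JkSection


/-! ### Abstract combination lemma -/

lemma exp_cancel (x y z : ℝ) (h : y + z = 0) : x * Real.exp y * Real.exp z = x := by
  rw [mul_assoc, ← Real.exp_add, h, Real.exp_zero, mul_one]

lemma combine {P : Type*} [TopologicalSpace P] (μ : P)
    (L : (ℕ → ℝ) → ℝ)
    (hLmono : ∀ u v : ℕ → ℝ, (∀ k, 1 ≤ k → u k ≤ v k) → (∀ k, 1 ≤ k → 0 ≤ u k) →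
      (∃ C : ℝ, ∀ k, 1 ≤ k → v k ≤ C) → L u ≤ L v)
    (hLmul : ∀ (u : ℕ → ℝ) (d : ℝ), 0 < d → (∀ k, 1 ≤ k → 0 ≤ u k) →
      (∃ C : ℝ, ∀ k, 1 ≤ k → u k ≤ C) → L (fun k => u k * d) = L u * d)
    (hLnn : ∀ u : ℕ → ℝ, (∀ k, 1 ≤ k → 0 ≤ u k) → (∃ C : ℝ, ∀ k, 1 ≤ k → u k ≤ C) → 0 ≤ L u)
    (F F0 : ℕ → Set P → ℝ) {B : ℝ} (hB : 0 < B)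
    (hFle : ∀ (G : Set P) (k : ℕ), 1 ≤ k → F k G ≤ B)
    (hF0le : ∀ (G : Set P) (k : ℕ), 1 ≤ k → F0 k G ≤ B)
    (hFnn : ∀ (G : Set P) (k : ℕ), 0 ≤ F k G) (hF0nn : ∀ (G : Set P) (k : ℕ), 0 ≤ F0 k G)
    (hFmono : ∀ k, 1 ≤ k → ∀ G G' : Set P, G ⊆ G' → F k G ≤ F k G')
    (hF0mono : ∀ k, 1 ≤ k → ∀ G G' : Set P, G ⊆ G' → F0 k G ≤ F0 k G')
    (c : ℝ)
    (hU : ∀ ε : ℝ, 0 < ε → ∃ U : Set P, IsOpen U ∧ μ ∈ U ∧ ∀ k, 1 ≤ k →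
      ∀ G : Set P, IsOpen G → G ⊆ U →
      F k G ≤ F0 k G * Real.exp (ε - c) ∧ F0 k G ≤ F k G * Real.exp (c + ε)) :
    (⨅ G : {G : Set P // IsOpen G ∧ μ ∈ G}, L (fun k => F0 k G.1)) =
    (⨅ G : {G : Set P // IsOpen G ∧ μ ∈ G}, L (fun k => F k G.1)) * Real.exp c := by
  haveI : Nonempty {G : Set P // IsOpen G ∧ μ ∈ G} :=
    ⟨⟨Set.univ, isOpen_univ, Set.mem_univ μ⟩⟩
  set A := ⨅ G : {G : Set P // IsOpen G ∧ μ ∈ G}, L (fun k => F0 k G.1) with hA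
  set Bb := ⨅ G : {G : Set P // IsOpen G ∧ μ ∈ G}, L (fun k => F k G.1) with hBb
  have hnnL0 : ∀ G : {G : Set P // IsOpen G ∧ μ ∈ G}, 0 ≤ L (fun k => F0 k G.1) :=
    fun G => hLnn _ (fun k _ => hF0nn _ _) ⟨B, fun k hk => hF0le _ k hk⟩
  have hnnL : ∀ G : {G : Set P // IsOpen G ∧ μ ∈ G}, 0 ≤ L (fun k => F k G.1) :=
    fun G => hLnn _ (fun k _ => hFnn _ _) ⟨B, fun k hk => hFle _ k hk⟩
  have hbb0 : BddBelow (Set.range fun G : {G : Set P // IsOpen G ∧ μ ∈ G} =>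
      L (fun k => F0 k G.1)) := ⟨0, by rintro y ⟨G, rfl⟩; exact hnnL0 G⟩
  have hbb : BddBelow (Set.range fun G : {G : Set P // IsOpen G ∧ μ ∈ G} =>
      L (fun k => F k G.1)) := ⟨0, by rintro y ⟨G, rfl⟩; exact hnnL G⟩
  have step1 : ∀ ε : ℝ, 0 < ε → A ≤ Bb * Real.exp (c + ε) := by
    intro ε hε
    obtain ⟨U, hUo, hUμ, hUc⟩ := hU ε hε
    have key : ∀ G : {G : Set P // IsOpen G ∧ μ ∈ G},
        A * Real.exp (-(c + ε)) ≤ L (fun k => F k G.1) := by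
      intro G
      have hGUo : IsOpen (G.1 ∩ U) := G.2.1.inter hUo
      have h1 : A ≤ L (fun k => F0 k (G.1 ∩ U)) :=
        ciInf_le hbb0 ⟨G.1 ∩ U, hGUo, ⟨G.2.2, hUμ⟩⟩
      have h2 : L (fun k => F0 k (G.1 ∩ U)) ≤ L (fun k => F k (G.1 ∩ U) * Real.exp (c + ε)) :=
        hLmono _ _ (fun k hk => (hUc k hk _ hGUo Set.inter_subset_right).2)
          (fun k _ => hF0nn _ _)
          ⟨B * Real.exp (c + ε), fun k hk =>
            mul_le_mul_of_nonneg_right (hFle _ k hk) (Real.exp_pos _).le⟩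
      have h3 : L (fun k => F k (G.1 ∩ U) * Real.exp (c + ε))
          = L (fun k => F k (G.1 ∩ U)) * Real.exp (c + ε) :=
        hLmul _ _ (Real.exp_pos _) (fun k _ => hFnn _ _) ⟨B, fun k hk => hFle _ k hk⟩
      have h4 : L (fun k => F k (G.1 ∩ U)) ≤ L (fun k => F k G.1) :=
        hLmono _ _ (fun k hk => hFmono k hk _ _ Set.inter_subset_left)
          (fun k _ => hFnn _ _) ⟨B, fun k hk => hFle _ k hk⟩
      have h5 : A ≤ L (fun k => F k G.1) * Real.exp (c + ε) := by
        calc A ≤ _ := h1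
          _ ≤ _ := h2
          _ = _ := h3
          _ ≤ L (fun k => F k G.1) * Real.exp (c + ε) :=
            mul_le_mul_of_nonneg_right h4 (Real.exp_pos _).le
      calc A * Real.exp (-(c + ε))
          ≤ (L (fun k => F k G.1) * Real.exp (c + ε)) * Real.exp (-(c + ε)) :=
            mul_le_mul_of_nonneg_right h5 (Real.exp_pos _).le
        _ = L (fun k => F k G.1) := exp_cancel _ _ _ (by ring)
    have h6 : A * Real.exp (-(c + ε)) ≤ Bb := le_ciInf key
    calc A = A * Real.exp (-(c + ε)) * Real.exp (c + ε) := (exp_cancel _ _ _ (by ring)).symm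
      _ ≤ Bb * Real.exp (c + ε) := mul_le_mul_of_nonneg_right h6 (Real.exp_pos _).le
  have step2 : ∀ ε : ℝ, 0 < ε → Bb * Real.exp c ≤ A * Real.exp ε := by
    intro ε hε
    obtain ⟨U, hUo, hUμ, hUc⟩ := hU ε hε
    have key : ∀ G : {G : Set P // IsOpen G ∧ μ ∈ G},
        Bb * Real.exp (c - ε) ≤ L (fun k => F0 k G.1) := by
      intro G
      have hGUo : IsOpen (G.1 ∩ U) := G.2.1.inter hUo
      have h1 : Bb ≤ L (fun k => F k (G.1 ∩ U)) :=
        ciInf_le hbb ⟨G.1 ∩ U, hGUo, ⟨G.2.2, hUμ⟩⟩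
      have h2 : L (fun k => F k (G.1 ∩ U)) ≤ L (fun k => F0 k (G.1 ∩ U) * Real.exp (ε - c)) :=
        hLmono _ _ (fun k hk => (hUc k hk _ hGUo Set.inter_subset_right).1)
          (fun k _ => hFnn _ _)
          ⟨B * Real.exp (ε - c), fun k hk =>
            mul_le_mul_of_nonneg_right (hF0le _ k hk) (Real.exp_pos _).le⟩
      have h3 : L (fun k => F0 k (G.1 ∩ U) * Real.exp (ε - c))
          = L (fun k => F0 k (G.1 ∩ U)) * Real.exp (ε - c) :=
        hLmul _ _ (Real.exp_pos _) (fun k _ => hF0nn _ _) ⟨B, fun k hk => hF0le _ k hk⟩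
      have h4 : L (fun k => F0 k (G.1 ∩ U)) ≤ L (fun k => F0 k G.1) :=
        hLmono _ _ (fun k hk => hF0mono k hk _ _ Set.inter_subset_left)
          (fun k _ => hF0nn _ _) ⟨B, fun k hk => hF0le _ k hk⟩
      have h5 : Bb ≤ L (fun k => F0 k G.1) * Real.exp (ε - c) := by
        calc Bb ≤ _ := h1
          _ ≤ _ := h2
          _ = _ := h3
          _ ≤ L (fun k => F0 k G.1) * Real.exp (ε - c) :=
            mul_le_mul_of_nonneg_right h4 (Real.exp_pos _).le
      calc Bb * Real.exp (c - ε)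
          ≤ (L (fun k => F0 k G.1) * Real.exp (ε - c)) * Real.exp (c - ε) :=
            mul_le_mul_of_nonneg_right h5 (Real.exp_pos _).le
        _ = L (fun k => F0 k G.1) := exp_cancel _ _ _ (by ring)
    have h6 : Bb * Real.exp (c - ε) ≤ A := le_ciInf key
    calc Bb * Real.exp c = (Bb * Real.exp (c - ε)) * Real.exp ε := by
          have hce : c - ε + ε = c := by ring
          rw [mul_assoc, ← Real.exp_add, hce]
      _ ≤ A * Real.exp ε := mul_le_mul_of_nonneg_right h6 (Real.exp_pos _).le
  have h1 : A ≤ Bb * Real.exp c := by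
    have ht : Tendsto (fun ε : ℝ => Bb * Real.exp (c + ε)) (𝓝[>] (0 : ℝ))
        (𝓝 (Bb * Real.exp c)) := by
      have hco : ContinuousAt (fun ε : ℝ => Bb * Real.exp (c + ε)) 0 :=
        (continuous_const.mul (Real.continuous_exp.comp
          (continuous_const.add continuous_id))).continuousAt
      have h' : Tendsto (fun ε : ℝ => Bb * Real.exp (c + ε)) (𝓝[>] (0 : ℝ))
          (𝓝 (Bb * Real.exp (c + 0))) := hco.tendsto.mono_left nhdsWithin_le_nhds
      simpa using h'
    exact ge_of_tendsto ht (eventually_mem_nhdsWithin.mono fun ε hε => step1 ε hε)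
  have h2 : Bb * Real.exp c ≤ A := by
    have ht : Tendsto (fun ε : ℝ => A * Real.exp ε) (𝓝[>] (0 : ℝ)) (𝓝 A) := by
      have hco : ContinuousAt (fun ε : ℝ => A * Real.exp ε) 0 :=
        (continuous_const.mul Real.continuous_exp).continuousAt
      have h' : Tendsto (fun ε : ℝ => A * Real.exp ε) (𝓝[>] (0 : ℝ))
          (𝓝 (A * Real.exp 0)) := hco.tendsto.mono_left nhdsWithin_le_nhds
      simpa using h'
    exact ge_of_tendsto ht (eventually_mem_nhdsWithin.mono fun ε hε => step2 ε hε)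
  linarith

/-! ### limsup / liminf satisfy the `L` axioms -/

lemma limsup_mono_ax (u v : ℕ → ℝ) (h : ∀ k, 1 ≤ k → u k ≤ v k)
    (hnn : ∀ k, 1 ≤ k → 0 ≤ u k) (hbd : ∃ C : ℝ, ∀ k, 1 ≤ k → v k ≤ C) :
    Filter.limsup u atTop ≤ Filter.limsup v atTop := by
  obtain ⟨C, hC⟩ := hbd
  exact Filter.limsup_le_limsup (eventually_atTop.mpr ⟨1, h⟩)
    (Filter.IsBoundedUnder.isCoboundedUnder_le
      (Filter.isBoundedUnder_of_eventually_ge (eventually_atTop.mpr ⟨1, hnn⟩)))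
    (Filter.isBoundedUnder_of_eventually_le (eventually_atTop.mpr ⟨1, hC⟩))

lemma liminf_mono_ax (u v : ℕ → ℝ) (h : ∀ k, 1 ≤ k → u k ≤ v k)
    (hnn : ∀ k, 1 ≤ k → 0 ≤ u k) (hbd : ∃ C : ℝ, ∀ k, 1 ≤ k → v k ≤ C) :
    Filter.liminf u atTop ≤ Filter.liminf v atTop := by
  obtain ⟨C, hC⟩ := hbd
  exact Filter.liminf_le_liminf (eventually_atTop.mpr ⟨1, h⟩)
    (Filter.isBoundedUnder_of_eventually_ge (eventually_atTop.mpr ⟨1, hnn⟩))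
    (Filter.IsBoundedUnder.isCoboundedUnder_ge
      (Filter.isBoundedUnder_of_eventually_le (eventually_atTop.mpr ⟨1, hC⟩)))

lemma limsup_mul_ax (u : ℕ → ℝ) (d : ℝ) (hd : 0 < d)
    (hnn : ∀ k, 1 ≤ k → 0 ≤ u k) (hbd : ∃ C : ℝ, ∀ k, 1 ≤ k → u k ≤ C) :
    Filter.limsup (fun k => u k * d) atTop = Filter.limsup u atTop * d := by
  obtain ⟨C, hC⟩ := hbd
  have h := (monotone_mul_right_of_nonneg hd.le).map_limsup_of_continuousAt
    (F := atTop) (a := u) (continuous_mul_right d).continuousAt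
    (Filter.isBoundedUnder_of_eventually_le (eventually_atTop.mpr ⟨1, hC⟩))
    (Filter.IsBoundedUnder.isCoboundedUnder_le
      (Filter.isBoundedUnder_of_eventually_ge (eventually_atTop.mpr ⟨1, hnn⟩)))
  simpa [Function.comp_def] using h.symm

lemma liminf_mul_ax (u : ℕ → ℝ) (d : ℝ) (hd : 0 < d)
    (hnn : ∀ k, 1 ≤ k → 0 ≤ u k) (hbd : ∃ C : ℝ, ∀ k, 1 ≤ k → u k ≤ C) :
    Filter.liminf (fun k => u k * d) atTop = Filter.liminf u atTop * d := by
  obtain ⟨C, hC⟩ := hbd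
  have h := (monotone_mul_right_of_nonneg hd.le).map_liminf_of_continuousAt
    (F := atTop) (a := u) (continuous_mul_right d).continuousAt
    (Filter.IsBoundedUnder.isCoboundedUnder_ge
      (Filter.isBoundedUnder_of_eventually_le (eventually_atTop.mpr ⟨1, hC⟩)))
    (Filter.isBoundedUnder_of_eventually_ge (eventually_atTop.mpr ⟨1, hnn⟩))
  simpa [Function.comp_def] using h.symm

lemma limsup_nn_ax (u : ℕ → ℝ) (hnn : ∀ k, 1 ≤ k → 0 ≤ u k)
    (hbd : ∃ C : ℝ, ∀ k, 1 ≤ k → u k ≤ C) : 0 ≤ Filter.limsup u atTop := by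
  obtain ⟨C, hC⟩ := hbd
  exact Filter.le_limsup_of_frequently_le ((eventually_atTop.mpr ⟨1, hnn⟩).frequently)
    (Filter.isBoundedUnder_of_eventually_le (eventually_atTop.mpr ⟨1, hC⟩))

lemma liminf_nn_ax (u : ℕ → ℝ) (hnn : ∀ k, 1 ≤ k → 0 ≤ u k)
    (hbd : ∃ C : ℝ, ∀ k, 1 ≤ k → u k ≤ C) : 0 ≤ Filter.liminf u atTop := by
  obtain ⟨C, hC⟩ := hbd
  exact Filter.le_liminf_of_le
    (Filter.IsBoundedUnder.isCoboundedUnder_ge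
      (Filter.isBoundedUnder_of_eventually_le (eventually_atTop.mpr ⟨1, hC⟩)))
    (eventually_atTop.mpr ⟨1, hnn⟩)

end Stmt12Aux

/-- Property (2) of the functionals: `W̄(μ) = W̄^Q(μ)·e^{∫ Q dμ}`, etc. -/
theorem stmt12 (n : ℕ) (hn : 0 < n) (K : Set (Fin n → ℂ)) (hK : IsCompact K)
    (ν : Measure ↥K) (hν : IsProbabilityMeasure ν) (Q : ↥K → ℝ) (hQ : Continuous Q)
    (μ : ProbabilityMeasure ↥K) :
    Wbar n μ = WbarQ n Q μ * Real.exp (∫ z, Q z ∂(μ : Measure ↥K)) ∧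
    Wlow n μ = WlowQ n Q μ * Real.exp (∫ z, Q z ∂(μ : Measure ↥K)) ∧
    Jbar n ν μ = JbarQ n ν Q μ * Real.exp (∫ z, Q z ∂(μ : Measure ↥K)) ∧
    Jlow n ν μ = JlowQ n ν Q μ * Real.exp (∫ z, Q z ∂(μ : Measure ↥K)) := by
  classical
  haveI : CompactSpace ↥K := isCompact_iff_compactSpace.mp hK
  haveI := hν
  obtain ⟨C, hC⟩ := hK.isBounded.exists_norm_le
  set R : ℝ := max C 1 with hRdef
  have hR : 1 ≤ R := le_max_right _ _
  have hKR : ∀ z : ↥K, ∀ i, ‖(z : Fin n → ℂ) i‖ ≤ R := by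
    intro z i
    have h1 : ‖(z : Fin n → ℂ) i‖ ≤ ‖(z : Fin n → ℂ)‖ := norm_le_pi_norm _ i
    have h2 : ‖(z : Fin n → ℂ)‖ ≤ C := hC _ z.2
    calc ‖(z : Fin n → ℂ) i‖ = ‖(z : Fin n → ℂ) i‖ := rfl
      _ ≤ C := le_trans h1 h2
      _ ≤ R := le_max_left _ _
  set fb : BoundedContinuousFunction ↥K ℝ := BoundedContinuousFunction.mkOfCompact ⟨Q, hQ⟩
    with hfb
  set M : ℝ := ‖fb‖ with hMdef
  have hM : 0 ≤ M := norm_nonneg _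
  have hQM : ∀ z : ↥K, |Q z| ≤ M := by
    intro z
    have h := BoundedContinuousFunction.norm_coe_le_norm fb z
    rw [Real.norm_eq_abs] at h
    exact h
  set B : ℝ := (2 : ℝ) ^ n * R * Real.exp M with hBdef
  have hB : 0 < B := by positivity
  have habsQ : ∀ k, 1 ≤ k → ∀ x : MIdx n k → ↥K,
      absVdmW n k Q x ≤ B ^ (k * NN n k) :=
    fun k hk x => Stmt12Aux.absVdmW_le_pow hR hKR hM hQM hk x
  have habs0 : ∀ k, 1 ≤ k → ∀ x : MIdx n k → ↥K,
      absVdmW n k (fun _ => (0 : ℝ)) x ≤ B ^ (k * NN n k) :=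
    fun k hk x => Stmt12Aux.absVdmW_le_pow hR hKR hM (fun z => by simpa using hM) hk x
  set c : ℝ := ∫ z, Q z ∂(μ : Measure ↥K) with hcdef
  have hcont : Continuous fun ν' : ProbabilityMeasure ↥K => ∫ z, Q z ∂(ν' : Measure ↥K) := by
    have h := MeasureTheory.ProbabilityMeasure.continuous_integral_boundedContinuousFunction
      (X := ↥K) fb
    simpa [hfb] using h
  have hUbase : ∀ ε : ℝ, 0 < ε → ∃ U : Set (ProbabilityMeasure ↥K), IsOpen U ∧ μ ∈ U ∧
      ∀ (k : ℕ) (x : MIdx n k → ↥K), empP x ∈ U →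
        |(NN n k : ℝ)⁻¹ * ∑ β, Q (x β) - c| ≤ ε := by
    intro ε hε
    refine ⟨(fun ν' : ProbabilityMeasure ↥K => ∫ z, Q z ∂(ν' : Measure ↥K)) ⁻¹'
      Metric.ball c ε, Metric.isOpen_ball.preimage hcont, ?_, ?_⟩
    · simpa [Metric.mem_ball, hcdef] using hε
    · intro k x hx
      have hx' : |(∫ z, Q z ∂(empP x : Measure ↥K)) - c| < ε := by
        simpa [Metric.mem_ball, Real.dist_eq] using hx
      rw [show ((empP x : Measure ↥K)) = emp x from rfl,
        Stmt12Aux.integral_emp x hQ] at hx'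
      exact hx'.le
  have hUW : ∀ ε : ℝ, 0 < ε → ∃ U : Set (ProbabilityMeasure ↥K), IsOpen U ∧ μ ∈ U ∧
      ∀ k, 1 ≤ k → ∀ G : Set (ProbabilityMeasure ↥K), IsOpen G → G ⊆ U →
        Wk n k Q G ≤ Wk n k (fun _ => (0 : ℝ)) G * Real.exp (ε - c) ∧
        Wk n k (fun _ => (0 : ℝ)) G ≤ Wk n k Q G * Real.exp (c + ε) := by
    intro ε hε
    obtain ⟨U, hUo, hUμ, hU3⟩ := hUbase ε hε
    exact ⟨U, hUo, hUμ, fun k hk G _ hGU =>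
      Stmt12Aux.Wk_compare hB.le hk (habsQ k hk) (habs0 k hk)
        (fun x hx => hU3 k x (hGU hx))⟩
  have hUJ : ∀ ε : ℝ, 0 < ε → ∃ U : Set (ProbabilityMeasure ↥K), IsOpen U ∧ μ ∈ U ∧
      ∀ k, 1 ≤ k → ∀ G : Set (ProbabilityMeasure ↥K), IsOpen G → G ⊆ U →
        Jk n k ν Q G ≤ Jk n k ν (fun _ => (0 : ℝ)) G * Real.exp (ε - c) ∧
        Jk n k ν (fun _ => (0 : ℝ)) G ≤ Jk n k ν Q G * Real.exp (c + ε) := by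
    intro ε hε
    obtain ⟨U, hUo, hUμ, hU3⟩ := hUbase ε hε
    exact ⟨U, hUo, hUμ, fun k hk G hGo hGU =>
      Stmt12Aux.Jk_compare hQ hk hGo (fun x hx => hU3 k x (hGU hx))⟩
  refine ⟨?_, ?_, ?_, ?_⟩
  · exact Stmt12Aux.combine μ (fun u => Filter.limsup u atTop)
      Stmt12Aux.limsup_mono_ax Stmt12Aux.limsup_mul_ax Stmt12Aux.limsup_nn_ax
      (fun k G => Wk n k Q G) (fun k G => Wk n k (fun _ => (0 : ℝ)) G) hB
      (fun G k hk => Stmt12Aux.Wk_le hB.le hk (habsQ k hk) G)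
      (fun G k hk => Stmt12Aux.Wk_le hB.le hk (habs0 k hk) G)
      (fun G k => Stmt12Aux.Wk_nonneg k Q G)
      (fun G k => Stmt12Aux.Wk_nonneg k _ G)
      (fun k hk G G' h => Stmt12Aux.Wk_mono hB.le hk (habsQ k hk) h)
      (fun k hk G G' h => Stmt12Aux.Wk_mono hB.le hk (habs0 k hk) h)
      c hUW
  · exact Stmt12Aux.combine μ (fun u => Filter.liminf u atTop)
      Stmt12Aux.liminf_mono_ax Stmt12Aux.liminf_mul_ax Stmt12Aux.liminf_nn_ax
      (fun k G => Wk n k Q G) (fun k G => Wk n k (fun _ => (0 : ℝ)) G) hB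
      (fun G k hk => Stmt12Aux.Wk_le hB.le hk (habsQ k hk) G)
      (fun G k hk => Stmt12Aux.Wk_le hB.le hk (habs0 k hk) G)
      (fun G k => Stmt12Aux.Wk_nonneg k Q G)
      (fun G k => Stmt12Aux.Wk_nonneg k _ G)
      (fun k hk G G' h => Stmt12Aux.Wk_mono hB.le hk (habsQ k hk) h)
      (fun k hk G G' h => Stmt12Aux.Wk_mono hB.le hk (habs0 k hk) h)
      c hUW
  · exact Stmt12Aux.combine μ (fun u => Filter.limsup u atTop)
      Stmt12Aux.limsup_mono_ax Stmt12Aux.limsup_mul_ax Stmt12Aux.limsup_nn_ax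
      (fun k G => Jk n k ν Q G) (fun k G => Jk n k ν (fun _ => (0 : ℝ)) G) hB
      (fun G k hk => Stmt12Aux.Jk_le hQ hB.le hk (habsQ k hk) G)
      (fun G k hk => Stmt12Aux.Jk_le continuous_const hB.le hk (habs0 k hk) G)
      (fun G k => Stmt12Aux.Jk_nonneg k ν Q G)
      (fun G k => Stmt12Aux.Jk_nonneg k ν _ G)
      (fun k hk G G' h => Stmt12Aux.Jk_mono k hQ h)
      (fun k hk G G' h => Stmt12Aux.Jk_mono k continuous_const h)
      c hUJ
  · exact Stmt12Aux.combine μ (fun u => Filter.liminf u atTop)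
      Stmt12Aux.liminf_mono_ax Stmt12Aux.liminf_mul_ax Stmt12Aux.liminf_nn_ax
      (fun k G => Jk n k ν Q G) (fun k G => Jk n k ν (fun _ => (0 : ℝ)) G) hB
      (fun G k hk => Stmt12Aux.Jk_le hQ hB.le hk (habsQ k hk) G)
      (fun G k hk => Stmt12Aux.Jk_le continuous_const hB.le hk (habs0 k hk) G)
      (fun G k => Stmt12Aux.Jk_nonneg k ν Q G)
      (fun G k => Stmt12Aux.Jk_nonneg k ν _ G)
      (fun k hk G G' h => Stmt12Aux.Jk_mono k hQ h)
      (fun k hk G G' h => Stmt12Aux.Jk_mono k continuous_const h)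
      c hUJ

end
end
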